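/- arXiv:2012.00285 — 3 statements merged into one kernel-verified Lean document; each statement's English description precedes it below -/
import Mathlib

section
/- For nonnegative integers m₀ and positive integers n, the following identity holds: Σ_{m > m₀} (1/m) · (m! n!)/((m+n)!) = (1/n) · (m₀! n!)/((m₀+n)!), where the sum is over integers m > m₀. -/
/-!
Writing `C(m, n) = m! n! / (m + n)!` for the connector, `C(m + 1, n) = (m + 1) / (m + 1 + n) · C(m, n)`
gives `C(m + 1, n) / (m + 1) = (C(m, n) - C(m + 1, n)) / n`, so the series telescopes to
`C(m₀, n) / n`, because `C(m, n) = 1 / binom(m + n, m) → 0` as `m → ∞` when `n > 0`.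
-/

open Filter Topology Nat

noncomputable def connector (m n : ℕ) : ℝ := ((m ! * n ! : ℕ) : ℝ) / ((m + n)! : ℝ)

lemma connector_eq_inv_choose (m n : ℕ) : connector m n = (((m + n).choose m : ℕ) : ℝ)⁻¹ := by
  rw [connector, Nat.cast_add_choose, inv_div, Nat.cast_mul]

lemma connector_succ_left (m n : ℕ) :
    connector (m + 1) n = (m + 1) / (m + 1 + n) * connector m n := by
  simp only [connector, Nat.cast_mul, add_right_comm m 1 n, Nat.factorial_succ, Nat.cast_add,
    Nat.cast_one]
  have : (0 : ℝ) < (m + n)! := by positivity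
  field_simp
  ring

lemma one_div_mul_connector_succ_left {n : ℕ} (hn : 0 < n) (m : ℕ) :
    1 / (m + 1 : ℝ) * connector (m + 1) n = (connector m n - connector (m + 1) n) / n := by
  rw [connector_succ_left]
  have : (0 : ℝ) < n := by exact_mod_cast hn
  field_simp
  ring

lemma tendsto_connector_atTop {n : ℕ} (hn : 0 < n) :
    Tendsto (fun m => connector m n) atTop (𝓝 0) := by
  simp only [connector_eq_inv_choose]
  refine tendsto_inv_atTop_zero.comp (tendsto_natCast_atTop_atTop.comp ?_)
  refine tendsto_atTop_mono (fun m => ?_) (tendsto_add_atTop_nat 1)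
  calc m + 1 = (m + 1).choose m := (Nat.choose_succ_self_right m).symm
    _ ≤ (m + n).choose m := Nat.choose_le_choose m (by omega)

lemma connector_antitone (n : ℕ) : Antitone fun m => connector m n := by
  refine antitone_nat_of_succ_le fun m => ?_
  rw [connector_succ_left]
  have : 0 ≤ connector m n := by unfold connector; positivity
  refine mul_le_of_le_one_left this ?_
  rw [div_le_one (by positivity)]
  linarith [(n.cast_nonneg : (0 : ℝ) ≤ n)]

lemma Antitone.hasSum_sub_succ {f : ℕ → ℝ} {l : ℝ} (hf : Antitone f)
    (hl : Tendsto f atTop (𝓝 l)) : HasSum (fun k => f k - f (k + 1)) (f 0 - l) := by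
  rw [hasSum_iff_tendsto_nat_of_nonneg fun k => sub_nonneg.2 (hf k.le_succ)]
  simp_rw [Finset.sum_range_sub']
  exact tendsto_const_nhds.sub hl

theorem stmt_1 (m₀ n : ℕ) (hn : 0 < n) :
    (∑' k : ℕ, (1 / ((m₀ + 1 + k : ℕ) : ℝ)) *
        (((m₀ + 1 + k).factorial * n.factorial : ℕ) : ℝ) / (((m₀ + 1 + k) + n).factorial : ℝ)) =
      (1 / (n : ℝ)) * ((m₀.factorial * n.factorial : ℕ) : ℝ) / ((m₀ + n).factorial : ℝ) := by
  have hterm : ∀ k, (1 / ((m₀ + 1 + k : ℕ) : ℝ)) *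
      (((m₀ + 1 + k).factorial * n.factorial : ℕ) : ℝ) / (((m₀ + 1 + k) + n).factorial : ℝ) =
      (connector (m₀ + k) n - connector (m₀ + k + 1) n) / n := by
    intro k
    rw [← one_div_mul_connector_succ_left hn, connector, mul_div_assoc, add_right_comm]
    push_cast
    rfl
  have htel : HasSum (fun k => connector (m₀ + k) n - connector (m₀ + k + 1) n)
      (connector m₀ n - 0) :=
    ((connector_antitone n).comp_monotone (monotone_id.const_add m₀)).hasSum_sub_succ
      ((tendsto_connector_atTop hn).comp (tendsto_atTop_mono (Nat.le_add_left · m₀) tendsto_id))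
  rw [tsum_congr hterm, (htel.div_const _).tsum_eq, sub_zero, connector]
  ring
end

section
/- The multiple zeta value ζ(1,2) := Σ_{0 < m₁ < m₂} 1/(m₁ m₂²) equals ζ(3) := Σ_{0 < n} 1/n³. -/
/-!
Euler's proof. Put `T(m, n) = 1 / (m n (m + n))` for `m, n ≥ 1`. The partial fraction identity
`T(m, n) = 1 / (m (m + n)²) + 1 / (n (m + n)²)` gives `∑ T = 2 ζ(1,2)`. On the other hand
`∑_m 1 / (m (m + n)) = H_n / n` telescopes, so `∑ T = ∑_n H_n / n² = ζ(1,2) + ζ(3)`, since grouping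
the terms of `ζ(1,2)` by `m₂` gives `∑_n H_{n-1} / n²`.
-/

open Finset Filter Topology

theorem hasSum_sub_succ_of_antitone {f : ℕ → ℝ} (hf : Antitone f)
    (h0 : Tendsto f atTop (𝓝 0)) : HasSum (fun n => f n - f (n + 1)) (f 0) := by
  rw [hasSum_iff_tendsto_nat_of_nonneg (fun n => sub_nonneg.2 (hf n.le_succ))]
  simp only [sum_range_sub']
  simpa using (tendsto_const_nhds (x := f 0)).sub h0

theorem hasSum_sub_add_of_antitone {f : ℕ → ℝ} (hf : Antitone f)
    (h0 : Tendsto f atTop (𝓝 0)) (k : ℕ) :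
    HasSum (fun n => f n - f (n + k)) (∑ i ∈ range k, f i) := by
  induction k with
  | zero => simp
  | succ k ih =>
    have hshift := hasSum_sub_succ_of_antitone (f := fun n => f (n + k))
      (fun m n hmn => hf (by omega)) (h0.comp (tendsto_add_atTop_nat k))
    rw [zero_add] at hshift
    rw [sum_range_succ]
    refine (ih.add hshift).congr_fun fun n => ?_
    rw [show n + (k + 1) = n + 1 + k by omega]
    ring

theorem hasSum_natCast_div_add_mul_add {c : ℝ} (hc : 0 < c) (k : ℕ) :
    HasSum (fun n : ℕ => (k : ℝ) / ((n + c) * (n + c + k))) (∑ i ∈ range k, 1 / (i + c)) := by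
  have hanti : Antitone fun n : ℕ => 1 / ((n : ℝ) + c) := fun m n hmn =>
    one_div_le_one_div_of_le (by positivity) (by gcongr)
  have hlim : Tendsto (fun n : ℕ => 1 / ((n : ℝ) + c)) atTop (𝓝 0) :=
    tendsto_const_nhds.div_atTop (tendsto_atTop_add_const_right _ c tendsto_natCast_atTop_atTop)
  convert hasSum_sub_add_of_antitone hanti hlim k using 2 with n
  push_cast
  field_simp
  ring

theorem HasSum.sum_antidiagonal {α A : Type*} [AddCommMonoid α] [TopologicalSpace α]
    [ContinuousAdd α] [RegularSpace α] [AddMonoid A] [HasAntidiagonal A] {f : A × A → α} {a : α}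
    (hf : HasSum f a) : HasSum (fun n => ∑ p ∈ antidiagonal n, f p) a :=
  (HasAntidiagonal.sigmaAntidiagonalEquivProd.hasSum_iff.2 hf).sigma fun n =>
    (antidiagonal n).hasSum f

theorem harmonic_eq_sum_one_div (n : ℕ) :
    (harmonic n : ℝ) = ∑ i ∈ range n, 1 / ((i : ℝ) + 1) := by
  simp [harmonic]

noncomputable def zeta12Summand (p : ℕ × ℕ) : ℝ :=
  1 / ((p.1 + 1) * (p.1 + p.2 + 2) ^ 2)

noncomputable def eulerSummand (p : ℕ × ℕ) : ℝ :=
  1 / ((p.1 + 1) * (p.2 + 1) * (p.1 + p.2 + 2))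

theorem zeta12Summand_nonneg (p : ℕ × ℕ) : 0 ≤ zeta12Summand p := by
  unfold zeta12Summand; positivity

theorem eulerSummand_eq_add_swap (p : ℕ × ℕ) :
    eulerSummand p = zeta12Summand p + zeta12Summand p.swap := by
  unfold eulerSummand zeta12Summand
  simp only [Prod.fst_swap, Prod.snd_swap]
  field_simp
  ring

theorem zeta12Summand_le (a b : ℕ) :
    zeta12Summand (a, b) ≤ 1 / ((a : ℝ) + 1) * (1 / ((b + (a + 1)) * (b + (a + 1) + 1))) := by
  unfold zeta12Summand
  rw [div_mul_div_comm, one_mul]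
  gcongr
  nlinarith

theorem hasSum_zeta12Summand_majorant (a : ℕ) :
    HasSum (fun b : ℕ => 1 / ((a : ℝ) + 1) * (1 / ((b + (a + 1)) * (b + (a + 1) + 1))))
      (1 / ((a : ℝ) + 1) ^ 2) := by
  have h := (hasSum_natCast_div_add_mul_add (c := (a : ℝ) + 1) (by positivity) 1).mul_left (1 / ((a : ℝ) + 1))
  rw [Nat.cast_one, sum_range_one, Nat.cast_zero, zero_add, div_mul_div_comm, one_mul, ← sq] at h
  simpa only [Nat.cast_one] using h

theorem summable_zeta12Summand : Summable zeta12Summand := by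
  have hslice (a : ℕ) : Summable fun b => zeta12Summand (a, b) :=
    (hasSum_zeta12Summand_majorant a).summable.of_nonneg_of_le
      (fun b => zeta12Summand_nonneg _) (zeta12Summand_le a)
  refine (summable_prod_of_nonneg zeta12Summand_nonneg).2 ⟨hslice, ?_⟩
  have hsq : Summable fun a : ℕ => 1 / ((a : ℝ) + 1) ^ 2 := by
    simpa using (summable_nat_add_iff 1).2 (Real.summable_one_div_nat_pow.2 one_lt_two)
  exact hsq.of_nonneg_of_le (fun a => tsum_nonneg fun b => zeta12Summand_nonneg _) fun a =>
    hasSum_le (zeta12Summand_le a) (hslice a).hasSum (hasSum_zeta12Summand_majorant a)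

theorem hasSum_eulerSummand_snd (a : ℕ) :
    HasSum (fun b => eulerSummand (a, b)) ((harmonic (a + 1) : ℝ) / ((a : ℝ) + 1) ^ 2) := by
  have h := (hasSum_natCast_div_add_mul_add one_pos (a + 1)).div_const (((a : ℝ) + 1) ^ 2)
  rw [← harmonic_eq_sum_one_div] at h
  refine h.congr_fun fun b => ?_
  unfold eulerSummand
  push_cast
  field_simp
  ring

theorem sum_antidiagonal_zeta12Summand (n : ℕ) :
    ∑ p ∈ antidiagonal n, zeta12Summand p = (harmonic (n + 1) : ℝ) / ((n : ℝ) + 2) ^ 2 := by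
  have h (p : ℕ × ℕ) (hp : p ∈ antidiagonal n) :
      zeta12Summand p = 1 / ((p.1 : ℝ) + 1) * (1 / ((n : ℝ) + 2) ^ 2) := by
    rw [HasAntidiagonal.mem_antidiagonal] at hp
    unfold zeta12Summand
    rw [← hp, div_mul_div_comm, one_mul]
    push_cast
    ring
  rw [sum_congr rfl h, ← sum_mul, Nat.sum_antidiagonal_eq_sum_range_succ_mk,
    harmonic_eq_sum_one_div]
  ring

/-- ζ(1,2) = ζ(3): here m₁ = a+1, m₂ = a+b+2 range over all pairs 0 < m₁ < m₂. -/
theorem stmt_2 :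
    (∑' a : ℕ, ∑' b : ℕ, 1 / (((a : ℝ) + 1) * ((a : ℝ) + (b : ℝ) + 2) ^ 2)) =
      ∑' n : ℕ, 1 / ((n : ℝ) + 1) ^ 3 := by
  set S := ∑' p, zeta12Summand p
  have hS : HasSum zeta12Summand S := summable_zeta12Summand.hasSum
  have hT : HasSum eulerSummand (S + S) :=
    (hS.add ((Equiv.prodComm ℕ ℕ).hasSum_iff.2 hS)).congr_fun eulerSummand_eq_add_swap
  have hH : HasSum (fun n : ℕ => (harmonic n : ℝ) / ((n : ℝ) + 1) ^ 2) S := by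
    rw [← hasSum_nat_add_iff' 1]
    simpa [sum_antidiagonal_zeta12Summand, add_assoc, one_add_one_eq_two] using hS.sum_antidiagonal
  have hζ3 : HasSum (fun n : ℕ => 1 / ((n : ℝ) + 1) ^ 3) S := by
    have h := (hT.prod_fiberwise hasSum_eulerSummand_snd).sub hH
    rw [add_sub_cancel_right] at h
    refine h.congr_fun fun n => ?_
    rw [harmonic_succ]
    push_cast
    field_simp
    ring
  rw [hζ3.tsum_eq]
  exact summable_zeta12Summand.tsum_prod.symm
end

section
/- For a complex number α with Re(α) > 0 and a nonnegative integer m, one has Σ_{n ≥ 0} (1/(n+α)) · ((α)_n/n!) · Γ(m+α+1)Γ(n+α+1)/Γ(m+n+2α+1) = (1/(m+α)) · (m!/(α)_m). -/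
open Complex Finset

/-- Pochhammer symbol (α)_n = α(α+1)⋯(α+n−1). -/
noncomputable def cpoch (α : ℂ) (n : ℕ) : ℂ := ∏ i ∈ Finset.range n, (α + i)

/-!
With `c = m + 2α + 1`, the `n`-th summand is `Γ(α) Γ(m+α+1) / Γ(c)` times the `n`-th coefficient
of `₂F₁(α, α; c; 1)`, so the identity is Gauss's summation
`₂F₁(a, b; c; 1) = Γ(c) Γ(c-a-b) / (Γ(c-a) Γ(c-b))` for `a = b = α`.

Gauss's summation follows from the contiguous relation
`c (c-a-b) F(c) = (c-a) (c-b) F(c+1)` for `F(c) = ₂F₁(a, b; c; 1)`: coefficientwise its two sides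
differ by a telescoping term `c n tₙ - c (n+1) tₙ₊₁`, and `n tₙ → 0` because
`tₙ ~ n^(a+b-c-1) Γ(c) / (Γ(a) Γ(b))` by Euler's limit formula for `Γ`. Iterating it,
`F(c) = (c-a)ₖ (c-b)ₖ / ((c)ₖ (c-a-b)ₖ) · F(c+k)`; as `k → ∞` the Pochhammer quotient tends to
the Gamma quotient, again by Euler's formula, and `F(c+k) → 1` by dominated convergence.
-/

open Filter Topology Asymptotics Polynomial
open scoped Nat

theorem ascPochhammer_eval_eq_prod_range {R : Type*} [CommSemiring R] (n : ℕ) (r : R) :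
    (ascPochhammer R n).eval r = ∏ j ∈ range n, (r + j) := by
  induction n with
  | zero => simp
  | succ n ih => rw [ascPochhammer_succ_eval, ih, prod_range_succ]

theorem cpoch_eq_ascPochhammer_eval (α : ℂ) (n : ℕ) : cpoch α n = (ascPochhammer ℂ n).eval α :=
  (ascPochhammer_eval_eq_prod_range n α).symm

theorem tsum_sub_succ_eq_of_tendsto_zero {E : Type*} [AddCommGroup E] [TopologicalSpace E]
    [IsTopologicalAddGroup E] [T2Space E] {g : ℕ → E} (hs : Summable fun n => g n - g (n + 1))
    (hg : Tendsto g atTop (𝓝 0)) : ∑' n, (g n - g (n + 1)) = g 0 := by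
  refine tendsto_nhds_unique hs.hasSum.tendsto_sum_nat ?_
  simp only [sum_range_sub']
  simpa using hg.const_sub (g 0)

namespace Complex

theorem ne_neg_natCast_of_re_pos {s : ℂ} (hs : 0 < s.re) (k : ℕ) : s ≠ -k := by
  rintro rfl
  simp only [neg_re, natCast_re, Left.neg_pos_iff] at hs
  linarith [k.cast_nonneg (α := ℝ)]

theorem ascPochhammer_eval_ne_zero {s : ℂ} (hs : ∀ k : ℕ, s ≠ -k) (n : ℕ) :
    (ascPochhammer ℂ n).eval s ≠ 0 := by
  rw [Ne, ascPochhammer_eval_eq_zero_iff]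
  rintro ⟨k, -, hk⟩
  exact hs k (by rw [hk, neg_neg])

theorem norm_ascPochhammer_eval_ofReal_le {x : ℝ} {s : ℂ} (hx : 0 ≤ x) (hxs : x ≤ s.re)
    (n : ℕ) : ‖(ascPochhammer ℂ n).eval (x : ℂ)‖ ≤ ‖(ascPochhammer ℂ n).eval s‖ := by
  simp only [ascPochhammer_eval_eq_prod_range, norm_prod]
  refine prod_le_prod (fun _ _ => norm_nonneg _) fun j _ => ?_
  calc ‖(x : ℂ) + j‖ = x + j := by
        rw [← ofReal_natCast, ← ofReal_add, norm_real, Real.norm_of_nonneg (by positivity)]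
    _ ≤ (s + j).re := by simpa using hxs
    _ ≤ ‖s + j‖ := re_le_norm _

theorem Gamma_add_nat_eq_mul {s : ℂ} (hs : ∀ k : ℕ, s ≠ -k) (n : ℕ) :
    Gamma (s + n) = (ascPochhammer ℂ n).eval s * Gamma s := by
  rw [← Gamma_add_nat_div_Gamma_eq s hs, div_mul_cancel₀ _ (Gamma_ne_zero hs)]

theorem GammaSeq_eq_div_ascPochhammer (s : ℂ) (k : ℕ) :
    GammaSeq s k = (k : ℂ) ^ s * k ! / (ascPochhammer ℂ (k + 1)).eval s := by
  rw [GammaSeq, ascPochhammer_eval_eq_prod_range]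

theorem tendsto_cpow_mul_ascPochhammer_ratio {a b c d : ℂ} (ha : Gamma a ≠ 0)
    (hb : Gamma b ≠ 0) :
    Tendsto (fun k : ℕ => (k : ℂ) ^ (c + d - a - b) *
        ((ascPochhammer ℂ (k + 1)).eval a * (ascPochhammer ℂ (k + 1)).eval b /
          ((ascPochhammer ℂ (k + 1)).eval c * (ascPochhammer ℂ (k + 1)).eval d))) atTop
      (𝓝 (Gamma c * Gamma d / (Gamma a * Gamma b))) := by
  have hlim := ((GammaSeq_tendsto_Gamma c).mul (GammaSeq_tendsto_Gamma d)).div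
    ((GammaSeq_tendsto_Gamma a).mul (GammaSeq_tendsto_Gamma b)) (mul_ne_zero ha hb)
  refine hlim.congr' ?_
  filter_upwards [eventually_ne_atTop 0] with k hk
  have hk' : (k : ℂ) ≠ 0 := Nat.cast_ne_zero.mpr hk
  have hpow : (k : ℂ) ^ (c + d - a - b) =
      (k : ℂ) ^ c * (k : ℂ) ^ d / ((k : ℂ) ^ a * (k : ℂ) ^ b) := by
    rw [sub_sub, cpow_sub _ _ hk', cpow_add _ _ hk', cpow_add _ _ hk']
  have hfact : (k ! : ℂ) ≠ 0 := Nat.cast_ne_zero.mpr k.factorial_ne_zero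
  simp only [Pi.div_apply, GammaSeq_eq_div_ascPochhammer, hpow, div_eq_mul_inv, mul_inv]
  field_simp

variable {a b c : ℂ}

theorem ordinaryHypergeometricCoefficient_contiguous (hc : ∀ k : ℕ, c ≠ -k) (n : ℕ) :
    c * (c - a - b) * ordinaryHypergeometricCoefficient a b c n -
        (c - a) * (c - b) * ordinaryHypergeometricCoefficient a b (c + 1) n =
      c * n * ordinaryHypergeometricCoefficient a b c n -
        c * (n + 1) * ordinaryHypergeometricCoefficient a b c (n + 1) := by
  have hshift : (ascPochhammer ℂ n).eval (c + 1) * c = (ascPochhammer ℂ n).eval c * (c + n) := by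
    rw [← ascPochhammer_succ_eval, ascPochhammer_succ_left]
    simp [mul_comm]
  have hc0 : c ≠ 0 := by simpa using hc 0
  have hcn : c + n ≠ 0 := fun h => hc n (eq_neg_of_add_eq_zero_left h)
  simp only [ordinaryHypergeometricCoefficient, ascPochhammer_succ_eval, Nat.factorial_succ,
    Nat.cast_mul, Nat.cast_succ]
  rw [eq_div_of_mul_eq hc0 hshift]
  field_simp
  ring

theorem tendsto_cpow_mul_ordinaryHypergeometricCoefficient_succ (ha : Gamma a ≠ 0)
    (hb : Gamma b ≠ 0) :
    Tendsto (fun k : ℕ => (k : ℂ) ^ (c + 1 - a - b) *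
      ordinaryHypergeometricCoefficient a b c (k + 1)) atTop
      (𝓝 (Gamma c / (Gamma a * Gamma b))) := by
  have h := tendsto_cpow_mul_ascPochhammer_ratio (c := c) (d := 1) ha hb
  simp only [Gamma_one, mul_one, ascPochhammer_eval_one] at h
  refine h.congr fun k => ?_
  simp only [ordinaryHypergeometricCoefficient, div_eq_mul_inv, mul_inv]
  ring

theorem isBigO_ordinaryHypergeometricCoefficient_succ (ha : Gamma a ≠ 0) (hb : Gamma b ≠ 0) :
    (fun k : ℕ => ordinaryHypergeometricCoefficient a b c (k + 1)) =O[atTop]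
      fun k : ℕ => (k : ℝ) ^ (a.re + b.re - c.re - 1) := by
  set w := c + 1 - a - b
  have hw : -w.re = a.re + b.re - c.re - 1 := by simp only [w, sub_re, add_re, one_re]; ring
  have hpow : (fun k : ℕ => ((k : ℂ) ^ w)⁻¹) =O[atTop]
      fun k : ℕ => (k : ℝ) ^ (a.re + b.re - c.re - 1) := by
    refine IsBigO.of_bound 1 ?_
    filter_upwards [eventually_gt_atTop 0] with k hk
    rw [norm_inv, norm_natCast_cpow_of_pos hk, ← hw, Real.rpow_neg k.cast_nonneg,
      Real.norm_of_nonneg (by positivity), one_mul]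
  have h := hpow.mul ((tendsto_cpow_mul_ordinaryHypergeometricCoefficient_succ
    (c := c) ha hb).isBigO_one ℝ)
  simp only [mul_one] at h
  refine h.congr' ?_ EventuallyEq.rfl
  filter_upwards [eventually_gt_atTop 0] with k hk
  rw [inv_mul_cancel_left₀ (cpow_ne_zero_iff ..|>.mpr (Or.inl (by exact_mod_cast hk.ne')))]

theorem summable_norm_ordinaryHypergeometricCoefficient (ha : Gamma a ≠ 0) (hb : Gamma b ≠ 0)
    (habc : a.re + b.re < c.re) :
    Summable fun n => ‖ordinaryHypergeometricCoefficient a b c n‖ := by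
  rw [← summable_nat_add_iff 1]
  exact summable_of_isBigO_nat (Real.summable_nat_rpow.mpr (by linarith))
    (isBigO_ordinaryHypergeometricCoefficient_succ ha hb).norm_left

theorem tendsto_natCast_mul_ordinaryHypergeometricCoefficient (ha : Gamma a ≠ 0)
    (hb : Gamma b ≠ 0) (habc : a.re + b.re < c.re) :
    Tendsto (fun n : ℕ => (n : ℂ) * ordinaryHypergeometricCoefficient a b c n) atTop (𝓝 0) := by
  rw [← tendsto_add_atTop_iff_nat 1]
  have hlin : (fun k : ℕ => ((k + 1 : ℕ) : ℂ)) =O[atTop] fun k : ℕ => (k : ℝ) := by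
    refine IsBigO.of_bound 2 ?_
    filter_upwards [eventually_ge_atTop 1] with k hk
    have : (1 : ℝ) ≤ k := by exact_mod_cast hk
    rw [Complex.norm_natCast, Real.norm_natCast]
    push_cast
    linarith
  have hrpow : (fun k : ℕ => (k : ℝ) * (k : ℝ) ^ (a.re + b.re - c.re - 1)) =ᶠ[atTop]
      fun k : ℕ => (k : ℝ) ^ (-(c.re - a.re - b.re)) := by
    filter_upwards [eventually_gt_atTop 0] with k hk
    rw [mul_comm, ← Real.rpow_add_one (by positivity)]
    ring_nf
  refine ((hlin.mul (isBigO_ordinaryHypergeometricCoefficient_succ (c := c) ha hb)).congr'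
    EventuallyEq.rfl hrpow).trans_tendsto ?_
  exact (tendsto_rpow_neg_atTop (by linarith)).comp tendsto_natCast_atTop_atTop

theorem ordinaryHypergeometric_one_eq_tsum :
    ₂F₁ a b c (1 : ℂ) = ∑' n, ordinaryHypergeometricCoefficient a b c n := by
  simp [ordinaryHypergeometric, ordinaryHypergeometric_sum_eq]

theorem ordinaryHypergeometric_one_contiguous (ha : Gamma a ≠ 0) (hb : Gamma b ≠ 0)
    (hc : ∀ k : ℕ, c ≠ -k) (habc : a.re + b.re < c.re) :
    c * (c - a - b) * ₂F₁ a b c (1 : ℂ) = (c - a) * (c - b) * ₂F₁ a b (c + 1) (1 : ℂ) := by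
  have hs := (summable_norm_ordinaryHypergeometricCoefficient ha hb habc).of_norm
  have hs1 := (summable_norm_ordinaryHypergeometricCoefficient (c := c + 1) ha hb
    (by simp only [add_re, one_re]; linarith)).of_norm
  set g := fun n : ℕ => c * n * ordinaryHypergeometricCoefficient a b c n
  have hcontig : (fun n => c * (c - a - b) * ordinaryHypergeometricCoefficient a b c n -
      (c - a) * (c - b) * ordinaryHypergeometricCoefficient a b (c + 1) n) =
      fun n => g n - g (n + 1) := by
    ext n
    simp only [g, ordinaryHypergeometricCoefficient_contiguous hc n]
    push_cast
    ring
  have hs' := hs.mul_left (c * (c - a - b))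
  have hs1' := hs1.mul_left ((c - a) * (c - b))
  have hg : Tendsto g atTop (𝓝 0) := by
    simpa [g, mul_assoc] using
      (tendsto_natCast_mul_ordinaryHypergeometricCoefficient ha hb habc).const_mul c
  rw [ordinaryHypergeometric_one_eq_tsum, ordinaryHypergeometric_one_eq_tsum, ← tsum_mul_left,
    ← tsum_mul_left, ← sub_eq_zero, ← hs'.tsum_sub hs1', hcontig,
    tsum_sub_succ_eq_of_tendsto_zero (hcontig ▸ hs'.sub hs1') hg]
  simp [g]

theorem ordinaryHypergeometric_one_eq_mul_add_nat (ha : 0 < a.re) (hb : 0 < b.re)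
    (habc : a.re + b.re < c.re) (k : ℕ) :
    ₂F₁ a b c (1 : ℂ) = (ascPochhammer ℂ k).eval (c - a) * (ascPochhammer ℂ k).eval (c - b) /
      ((ascPochhammer ℂ k).eval c * (ascPochhammer ℂ k).eval (c - a - b)) *
        ₂F₁ a b (c + k) (1 : ℂ) := by
  induction k with
  | zero => simp
  | succ k ih =>
    have habck : a.re + b.re < (c + k).re := by
      simp only [add_re, natCast_re]; linarith [k.cast_nonneg (α := ℝ)]
    have hck : 0 < (c + k).re := by linarith
    have habck' : 0 < (c - a - b + k).re := by
      simp only [add_re, natCast_re, sub_re] at habck ⊢; linarith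
    have hrec := ordinaryHypergeometric_one_contiguous (Gamma_ne_zero_of_re_pos ha)
      (Gamma_ne_zero_of_re_pos hb) (ne_neg_natCast_of_re_pos hck) habck
    have hc0 := ne_zero_of_re_pos hck
    have hcab0 := ne_zero_of_re_pos habck'
    have hstep : ₂F₁ a b (c + k) (1 : ℂ) = (c + k - a) * (c + k - b) /
        ((c + k) * (c - a - b + k)) * ₂F₁ a b (c + k + 1) (1 : ℂ) := by
      rw [div_mul_eq_mul_div, eq_div_iff (mul_ne_zero hc0 hcab0)]
      linear_combination hrec
    rw [ih, hstep]
    simp only [ascPochhammer_succ_eval, Nat.cast_succ, ← add_assoc]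
    field_simp
    ring

theorem tendsto_ordinaryHypergeometric_one_add_nat (ha : Gamma a ≠ 0) (hb : Gamma b ≠ 0)
    (hc : 0 < c.re) (habc : a.re + b.re < c.re) :
    Tendsto (fun k : ℕ => ₂F₁ a b (c + k) (1 : ℂ)) atTop (𝓝 1) := by
  simp only [ordinaryHypergeometric_one_eq_tsum]
  -- the coefficients at the real parameter `c.re` dominate those at `c + k`
  have hdom := summable_norm_ordinaryHypergeometricCoefficient (c := (c.re : ℂ)) ha hb
    (by simpa using habc)
  have hbound : ∀ k n : ℕ, ‖ordinaryHypergeometricCoefficient a b (c + k) n‖ ≤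
      ‖ordinaryHypergeometricCoefficient a b (c.re : ℂ) n‖ := by
    intro k n
    have hP := ascPochhammer_eval_ne_zero (ne_neg_natCast_of_re_pos (s := (c.re : ℂ))
      (by simpa using hc)) n
    simp only [ordinaryHypergeometricCoefficient, norm_mul, norm_inv]
    gcongr
    exact norm_ascPochhammer_eval_ofReal_le hc.le (by simp) n
  have hlim : ∀ n : ℕ, Tendsto (fun k : ℕ => ordinaryHypergeometricCoefficient a b (c + k) n)
      atTop (𝓝 (if n = 0 then 1 else 0)) := by
    rintro (_ | n)
    · simp [ordinaryHypergeometricCoefficient]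
    have hnorm : Tendsto (fun k : ℕ => ‖c + k‖) atTop atTop :=
      tendsto_atTop_mono (fun k => by simpa using re_le_norm (c + k))
        (tendsto_atTop_add_const_left _ c.re tendsto_natCast_atTop_atTop)
    have hdeg : 0 < (ascPochhammer ℂ (n + 1)).degree := by
      rw [← natDegree_pos_iff_degree_pos, ascPochhammer_natDegree]
      exact n.succ_pos
    have hP := tendsto_norm_atTop_iff_cobounded.mp
      ((ascPochhammer ℂ (n + 1)).tendsto_norm_atTop hdeg hnorm)
    simpa using (tendsto_inv₀_cobounded.comp hP).const_mul
      (((n + 1)! : ℂ)⁻¹ * (ascPochhammer ℂ (n + 1)).eval a * (ascPochhammer ℂ (n + 1)).eval b)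
  simpa using tendsto_tsum_of_dominated_convergence hdom hlim (Eventually.of_forall hbound)

theorem ordinaryHypergeometric_one_eq_Gamma (ha : 0 < a.re) (hb : 0 < b.re)
    (habc : a.re + b.re < c.re) :
    ₂F₁ a b c (1 : ℂ) = Gamma c * Gamma (c - a - b) / (Gamma (c - a) * Gamma (c - b)) := by
  have hca : 0 < (c - a).re := by simp only [sub_re, sub_pos]; linarith
  have hcb : 0 < (c - b).re := by simp only [sub_re, sub_pos]; linarith
  have hratio := tendsto_cpow_mul_ascPochhammer_ratio (c := c) (d := c - a - b)
    (Gamma_ne_zero_of_re_pos hca) (Gamma_ne_zero_of_re_pos hcb)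
  have hlim := hratio.mul ((tendsto_ordinaryHypergeometric_one_add_nat
    (Gamma_ne_zero_of_re_pos ha) (Gamma_ne_zero_of_re_pos hb) (by linarith) habc).comp
      (tendsto_add_atTop_nat 1))
  simp only [show c + (c - a - b) - (c - a) - (c - b) = 0 by ring, cpow_zero, one_mul,
    mul_one] at hlim
  exact tendsto_nhds_unique
    (tendsto_const_nhds.congr fun k =>
      ordinaryHypergeometric_one_eq_mul_add_nat ha hb habc (k + 1)) hlim

end Complex

theorem one_div_add_mul_cpoch_mul_Gamma_div_Gamma_eq {α c : ℂ} (hα : ∀ k : ℕ, α ≠ -k)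
    (hc : ∀ k : ℕ, c ≠ -k) (n : ℕ) :
    1 / ((n : ℂ) + α) * (cpoch α n / n !) * (Gamma ((n : ℂ) + α + 1) / Gamma (c + n)) =
      Gamma α / Gamma c * ordinaryHypergeometricCoefficient α α c n := by
  have hαn : (n : ℂ) + α ≠ 0 := fun h => hα n (by linear_combination h)
  rw [show (n : ℂ) + α + 1 = α + (n + 1 : ℕ) by push_cast; ring, Gamma_add_nat_eq_mul hα,
    Gamma_add_nat_eq_mul hc, ascPochhammer_succ_eval, cpoch_eq_ascPochhammer_eval]
  field_simp
  ring

theorem stmt_8 (α : ℂ) (hα : 0 < α.re) (m : ℕ) :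
    (∑' n : ℕ, (1 / ((n : ℂ) + α)) * (cpoch α n / (n.factorial : ℂ)) *
        (Complex.Gamma ((m : ℂ) + α + 1) * Complex.Gamma ((n : ℂ) + α + 1) /
          Complex.Gamma ((m : ℂ) + (n : ℂ) + 2 * α + 1))) =
      (1 / ((m : ℂ) + α)) * ((m.factorial : ℂ) / cpoch α m) := by
  set c : ℂ := m + 2 * α + 1
  have hc_re : c.re = m + 2 * α.re + 1 := by simp [c]
  have hc : 0 < c.re := by rw [hc_re]; positivity
  have hα' := ne_neg_natCast_of_re_pos hα
  have hsummand (n : ℕ) : 1 / ((n : ℂ) + α) * (cpoch α n / n !) * (Gamma ((m : ℂ) + α + 1) *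
      Gamma ((n : ℂ) + α + 1) / Gamma ((m : ℂ) + n + 2 * α + 1)) =
      Gamma ((m : ℂ) + α + 1) *
        (Gamma α / Gamma c * ordinaryHypergeometricCoefficient α α c n) := by
    rw [← one_div_add_mul_cpoch_mul_Gamma_div_Gamma_eq hα' (ne_neg_natCast_of_re_pos hc),
      show (m : ℂ) + n + 2 * α + 1 = c + n by ring]
    ring
  have hgauss : ₂F₁ α α c (1 : ℂ) = Gamma c * m ! / Gamma ((m : ℂ) + α + 1) ^ 2 := by
    rw [ordinaryHypergeometric_one_eq_Gamma hα hα (by rw [hc_re]; linarith),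
      show c - α - α = (m : ℂ) + 1 by ring, show c - α = (m : ℂ) + α + 1 by ring,
      Gamma_nat_eq_factorial, sq]
  have hΓ : Gamma ((m : ℂ) + α + 1) = cpoch α m * (m + α) * Gamma α := by
    rw [show (m : ℂ) + α + 1 = α + (m + 1 : ℕ) by push_cast; ring, Gamma_add_nat_eq_mul hα',
      ascPochhammer_succ_eval, cpoch_eq_ascPochhammer_eval, add_comm α]
  rw [tsum_congr hsummand, tsum_mul_left, tsum_mul_left, ← ordinaryHypergeometric_one_eq_tsum,
    hgauss, hΓ]
  have hΓα := Gamma_ne_zero hα'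
  have hΓc := Gamma_ne_zero_of_re_pos hc
  field_simp
end
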